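/- Let a, b be integers with a ≥ 1, b ≥ 1 and a*b ≥ 4, let c, d be the associated recursive sequences, and let p be an odd prime with a*b ≡ 4 (mod p). Set M = (2 : ZMod p)⁻¹ • !![0, (a : ZMod p); (b : ZMod p), 0], a 2×2 matrix over ℤ/p. Then for every natural number n the vector ((c n : ZMod p), (d n : ZMod p)) equals (n : ZMod p) • (M^(n+1)) applied to the vector (1, 1). -/

import Mathlib

/-- The pair of recursive sequences `(c n, d n)` associated to a generalized
Cartan matrix of rank two with off-diagonal entries `-a`, `-b`:
`c 0 = d 0 = 0`, `c 1 = d 1 = 1`, `c (j+1) = a * d j - c (j-1)`,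
`d (j+1) = b * c j - d (j-1)`. -/
def KMcd (a b : ℤ) : ℕ → ℤ × ℤ
  | 0 => (0, 0)
  | 1 => (1, 1)
  | n + 2 => (a * (KMcd a b (n + 1)).2 - (KMcd a b n).1,
              b * (KMcd a b (n + 1)).1 - (KMcd a b n).2)

/-- The sequence `c`. -/
def KMc (a b : ℤ) (n : ℕ) : ℤ := (KMcd a b n).1

/-- The sequence `d`. -/
def KMd (a b : ℤ) (n : ℕ) : ℤ := (KMcd a b n).2

/-- `g n = gcd (c n) (d n)`. -/
def KMg (a b : ℤ) (n : ℕ) : ℕ := Int.gcd (KMc a b n) (KMd a b n)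

/-!
Over `ZMod p` the recurrence reads `v (n+2) = N v (n+1) - v n` with `N = !![0, a; b, 0]`, and
`a b = 4` makes `M = N / 2` an involution. For an involution `M` the sequence `n • M ^ (n+1) w`
satisfies this recurrence, since `2 M · (n+1) M ^ (n+2) - n M ^ (n+1) = (n+2) M ^ (n+3)` once
`M ^ (n+3) = M ^ (n+1)`; both sequences start with `0, w`.
-/

open Matrix

theorem KMc_add_two (a b : ℤ) (n : ℕ) : KMc a b (n + 2) = a * KMd a b (n + 1) - KMc a b n := rfl

theorem KMd_add_two (a b : ℤ) (n : ℕ) : KMd a b (n + 2) = b * KMc a b (n + 1) - KMd a b n := rfl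

theorem Nat.seq_eq_of_two_step_recurrence {α : Type*} {u v : ℕ → α} (f : α → α → α)
    (h0 : u 0 = v 0) (h1 : u 1 = v 1)
    (hu : ∀ n, u (n + 2) = f (u (n + 1)) (u n)) (hv : ∀ n, v (n + 2) = f (v (n + 1)) (v n)) :
    u = v := by
  funext n
  induction n using Nat.twoStepInduction with
  | zero => exact h0
  | one => exact h1
  | more n ihn ihn1 => rw [hu, hv, ihn, ihn1]

section CommRing

variable {R : Type*} [CommRing R]

theorem KMc_KMd_vec_add_two (a b : ℤ) (n : ℕ) :
    ![(KMc a b (n + 2) : R), (KMd a b (n + 2) : R)] =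
      !![0, (a : R); (b : R), 0] *ᵥ ![(KMc a b (n + 1) : R), (KMd a b (n + 1) : R)]
        - ![(KMc a b n : R), (KMd a b n : R)] := by
  ext i
  fin_cases i <;> simp [KMc_add_two, KMd_add_two, mul_comm]

theorem Matrix.antidiag_sq (x y : R) :
    !![0, x; y, 0] ^ 2 = (x * y) • (1 : Matrix (Fin 2) (Fin 2) R) := by
  ext i j
  fin_cases i <;> fin_cases j <;> simp [sq, mul_comm]

theorem Matrix.natCast_smul_pow_mulVec_add_two {ι : Type*} [Fintype ι] [DecidableEq ι]
    {M : Matrix ι ι R} (hM : M ^ 2 = 1) (w : ι → R) (n : ℕ) :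
    ((n + 2 : ℕ) : R) • (M ^ (n + 3)) *ᵥ w =
      ((2 : R) • M) *ᵥ (((n + 1 : ℕ) : R) • (M ^ (n + 2)) *ᵥ w) - (n : R) • (M ^ (n + 1)) *ᵥ w := by
  have hperiod : M ^ (n + 1) = M ^ (n + 3) := by rw [pow_add M (n + 1) 2, hM, mul_one]
  rw [hperiod, mulVec_smul, smul_mulVec, mulVec_mulVec, ← pow_succ', smul_smul, ← sub_smul]
  push_cast
  ring_nf

end CommRing

theorem matrix_formula_zmod_general
    (a b : ℤ)
    (p : ℕ) (hodd : Odd p)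
    (hmod : a * b ≡ 4 [ZMOD (p : ℤ)]) :
    let M : Matrix (Fin 2) (Fin 2) (ZMod p) :=
      (2 : ZMod p)⁻¹ • !![0, ((a : ℤ) : ZMod p); ((b : ℤ) : ZMod p), 0]
    ∀ n : ℕ,
      ![((KMc a b n : ℤ) : ZMod p), ((KMd a b n : ℤ) : ZMod p)]
        = (n : ZMod p) • (M ^ (n + 1)).mulVec ![1, 1] := by
  intro M
  set N : Matrix (Fin 2) (Fin 2) (ZMod p) := !![0, ((a : ℤ) : ZMod p); ((b : ℤ) : ZMod p), 0]
  have htwo : (2 : ZMod p) * 2⁻¹ = 1 := by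
    exact_mod_cast ZMod.coe_mul_inv_eq_one 2 hodd.coprime_two_left
  have hab : ((a : ℤ) : ZMod p) * ((b : ℤ) : ZMod p) = 4 := by
    exact_mod_cast (ZMod.intCast_eq_intCast_iff _ _ _).mpr hmod
  have hM : M ^ 2 = 1 := by
    rw [smul_pow, antidiag_sq, hab, smul_smul,
      show (2 : ZMod p)⁻¹ ^ 2 * 4 = 1 by linear_combination (2 * (2 : ZMod p)⁻¹ + 1) * htwo, one_smul]
  have h2M : (2 : ZMod p) • M = N := by rw [smul_smul, htwo, one_smul]
  refine congrFun (Nat.seq_eq_of_two_step_recurrence (fun x y => N *ᵥ x - y) ?_ ?_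
    (KMc_KMd_vec_add_two a b) fun n => ?_)
  · simp [KMc, KMd, KMcd]
  · simp [KMc, KMd, KMcd, hM]
  · rw [← h2M]
    exact natCast_smul_pow_mulVec_add_two hM _ n

theorem matrix_formula_zmod
    (a b : ℤ) (ha : 1 ≤ a) (hb : 1 ≤ b) (hab : 4 ≤ a * b)
    (p : ℕ) (hp : p.Prime) (hodd : Odd p)
    (hmod : a * b ≡ 4 [ZMOD (p : ℤ)]) :
    let M : Matrix (Fin 2) (Fin 2) (ZMod p) :=
      (2 : ZMod p)⁻¹ • !![0, ((a : ℤ) : ZMod p); ((b : ℤ) : ZMod p), 0]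
    ∀ n : ℕ,
      ![((KMc a b n : ℤ) : ZMod p), ((KMd a b n : ℤ) : ZMod p)]
        = (n : ZMod p) • (M ^ (n + 1)).mulVec ![1, 1] :=
  matrix_formula_zmod_general a b p hodd hmod
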